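/- Let G be a K4-free graph on n vertices with e ≤ n^2/4 edges. Then G can be made bipartite by deleting at most 3n^2/28 edges; that is, e - b(G) ≤ 3n^2/28. -/

import Mathlib

/-!
Let `b` be the max cut and count edges as ordered pairs, so that `G.interedges s s` has twice
as many elements as there are edges inside `s`. Any cut of an induced subgraph `G[W]` extends
greedily to a cut of `G` that also gains half of the edges not inside `W`. Since `G` is
`K₄`-free, each neighbourhood `N(v)` is triangle-free, so the neighbourhood inside `N(v)` of a
well-chosen `u ∈ N(v)` is a cut of `G[N(v)]` with at least `4 e(N(v))² / d(v)²` edges (by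
averaging over `u` and Cauchy–Schwarz); extending it bounds `e(N(v))` by `d(v)²` and `2b - e`.
Cutting `G` along every `N(v)` instead gives `∑ d(v)² ≤ n b + 2 ∑ e(N(v))`. Together with
`∑ d(v)² ≥ 4e² / n` this yields `92 e² + 32 n² e ≤ 96 n² b`, hence `e - b ≤ 3n²/28` once
`e ≤ n²/4`.
-/

open Finset

namespace SimpleGraph

variable {V : Type*} [Fintype V] [DecidableEq V] (G : SimpleGraph V) [DecidableRel G.Adj]

/-- The number of edges of `G` crossing the cut `(S, Sᶜ)`. -/
def cutSize (S : Finset V) : ℕ :=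
  ((S ×ˢ Sᶜ).filter fun p => G.Adj p.1 p.2).card

/-- `b(G)`: the maximum number of edges in a bipartite subgraph of `G`,
equivalently the maximum over vertex subsets `S` of the number of edges
between `S` and its complement. -/
def maxCut : ℕ := Finset.univ.sup fun S : Finset V => G.cutSize S

/-- The number of edges of `G` with both endpoints in `S`. -/
def spanEdges (S : Finset V) : ℕ :=
  (G.edgeFinset.filter fun e => e ∈ S.sym2).card

end SimpleGraph

-- The larger root of `4x² = d(x + t)` is `(d + √(d² + 16dt)) / 8`, and
-- `4√(d² + 16dt) ≤ 5d + 16t` because `(3d - 16t)² ≥ 0`.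
theorem thirtytwo_mul_le_of_four_mul_sq_le {x d t : ℝ} (hd : 0 ≤ d) (ht : 0 ≤ t)
    (h : 4 * x ^ 2 ≤ d * (x + t)) : 32 * x ≤ 9 * d + 16 * t := by
  nlinarith [sq_nonneg (3 * d - 16 * t), sq_nonneg (8 * x - 5 * d - 16 * t)]

theorem sub_le_three_mul_sq_div_of_bounds {n m b D : ℝ} (hn : 0 ≤ n) (hb : 0 ≤ b)
    (hm : m ≤ n ^ 2 / 4) (hCS : 4 * m ^ 2 ≤ n * D) (hD : 23 * D ≤ n * (96 * b - 32 * m)) :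
    m - b ≤ 3 * n ^ 2 / 28 := by
  rcases hn.eq_or_lt with rfl | hn
  · nlinarith
  have hcut : 92 * m ^ 2 ≤ n ^ 2 * (96 * b - 32 * m) := by nlinarith
  -- At `m = n²/4`, `hcut` gives `m - b ≤ 41n²/384`, just below `3n²/28`.
  have hscaled : n ^ 2 * (2688 * (m - b)) ≤ n ^ 2 * (288 * n ^ 2) := by
    nlinarith [sq_nonneg (n ^ 2 / 4 - m), mul_nonneg (sq_nonneg n) (sub_nonneg.2 hm)]
  linarith [le_of_mul_le_mul_left hscaled (by positivity)]

namespace SimpleGraph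

variable {V : Type*} {G : SimpleGraph V} [DecidableRel G.Adj] {s t t₁ t₂ : Finset V} {u : V}

theorem card_interedges_eq_sum (s t : Finset V) :
    #(G.interedges s t) = ∑ a ∈ s, #{b ∈ t | G.Adj a b} := by
  simp only [interedges_def, card_filter, sum_product]

theorem card_interedges_comm (s t : Finset V) :
    #(G.interedges s t) = #(G.interedges t s) :=
  @Rel.card_interedges_comm _ G.Adj _ ⟨fun _ _ ↦ Adj.symm⟩ s t

theorem sum_sum_filter_adj {M : Type*} [AddCommMonoid M] (s : Finset V) (f : V → M) :
    ∑ u ∈ s, ∑ a ∈ s with G.Adj u a, f a = ∑ a ∈ s, #{u ∈ s | G.Adj a u} • f a := by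
  simp_rw [sum_filter]
  rw [sum_comm]
  refine sum_congr rfl fun a _ ↦ ?_
  simp_rw [← sum_filter, sum_const, G.adj_comm]

section Fintype

variable [Fintype V]

theorem card_interedges_univ_right (s : Finset V) :
    #(G.interedges s univ) = ∑ a ∈ s, G.degree a := by
  simp only [card_interedges_eq_sum, ← neighborFinset_eq_filter, card_neighborFinset_eq_degree]

theorem card_interedges_univ : #(G.interedges univ univ) = 2 * #G.edgeFinset := by
  rw [card_interedges_univ_right, sum_degrees_eq_twice_card_edges]

theorem sq_two_mul_card_edgeFinset_le_card_mul_sum_degree_sq :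
    (2 * #G.edgeFinset) ^ 2 ≤ Fintype.card V * ∑ v, G.degree v ^ 2 := by
  rw [← sum_degrees_eq_twice_card_edges, ← card_univ]
  exact sq_sum_le_card_mul_sum_sq

end Fintype

variable [DecidableEq V]

theorem card_interedges_union_right (s : Finset V) (h : Disjoint t₁ t₂) :
    #(G.interedges s (t₁ ∪ t₂)) = #(G.interedges s t₁) + #(G.interedges s t₂) := by
  simp only [card_interedges_eq_sum, filter_union, ← sum_add_distrib]
  exact sum_congr rfl fun a _ ↦ card_union_of_disjoint (disjoint_filter_filter h)

theorem card_interedges_insert_left (hu : u ∉ s) (t : Finset V) :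
    #(G.interedges (insert u s) t) = #{b ∈ t | G.Adj u b} + #(G.interedges s t) := by
  rw [card_interedges_eq_sum, sum_insert hu, card_interedges_eq_sum]

theorem card_interedges_insert_right (hu : u ∉ t) (s : Finset V) :
    #(G.interedges s (insert u t)) = #(G.interedges s t) + #{b ∈ s | G.Adj u b} := by
  rw [card_interedges_comm, card_interedges_insert_left hu, card_interedges_comm, add_comm]

theorem card_interedges_insert_self (hu : u ∉ s) :
    #(G.interedges (insert u s) (insert u s)) =
      #(G.interedges s s) + 2 * #{b ∈ s | G.Adj u b} := by
  rw [card_interedges_insert_left hu, card_interedges_insert_right hu, filter_insert,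
    if_neg (G.irrefl (v := u))]
  ring

theorem exists_sq_card_interedges_le_of_triangleFree_on {W : Finset V}
    (hW : ∀ s ⊆ W, ¬G.IsNClique 3 s) :
    ∃ X ⊆ W, #(G.interedges W W) ^ 2 ≤ #W ^ 2 * #(G.interedges X (W \ X)) := by
  rcases W.eq_empty_or_nonempty with rfl | hne
  · exact ⟨∅, empty_subset _, by simp⟩
  set d : V → ℕ := fun a ↦ #{b ∈ W | G.Adj a b}
  set c : V → ℕ := fun u ↦ #(G.interedges {a ∈ W | G.Adj u a} (W \ {a ∈ W | G.Adj u a}))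
  -- A neighbourhood inside `W` spans no edge, so the cut around it collects all its degrees.
  have hc : ∀ u ∈ W, c u = ∑ a ∈ W with G.Adj u a, d a := by
    intro u hu
    have hempty : G.interedges {a ∈ W | G.Adj u a} {a ∈ W | G.Adj u a} = ∅ := by
      refine eq_empty_of_forall_notMem fun ⟨a, b⟩ hab ↦ ?_
      simp only [mk_mem_interedges_iff, mem_filter] at hab
      obtain ⟨⟨haW, hua⟩, ⟨hbW, hub⟩, hab⟩ := hab
      exact hW {u, a, b} (by simp [insert_subset_iff, *])
        (is3Clique_triple_iff.2 ⟨hua, hub, hab⟩)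
    have hsplit := card_interedges_union_right (G := G) {a ∈ W | G.Adj u a}
      (sdiff_disjoint : Disjoint (W \ {a ∈ W | G.Adj u a}) _)
    rwa [sdiff_union_of_subset (filter_subset _ _), hempty, card_empty, add_zero,
      card_interedges_eq_sum, eq_comm] at hsplit
  have hsum : ∑ u ∈ W, c u = ∑ a ∈ W, d a ^ 2 := by
    rw [sum_congr rfl hc, sum_sum_filter_adj]
    simp only [smul_eq_mul, sq, d]
  obtain ⟨u, -, hu⟩ : ∃ u ∈ W, ∑ a ∈ W, d a ^ 2 ≤ #W * c u := by
    refine exists_le_of_sum_le hne ?_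
    rw [sum_const, ← mul_sum, hsum, smul_eq_mul]
  refine ⟨{a ∈ W | G.Adj u a}, filter_subset _ _, ?_⟩
  calc #(G.interedges W W) ^ 2 ≤ #W * ∑ a ∈ W, d a ^ 2 := by
        rw [card_interedges_eq_sum]; exact sq_sum_le_card_mul_sum_sq
    _ ≤ #W * (#W * c u) := Nat.mul_le_mul_left _ hu
    _ = #W ^ 2 * c u := by ring

variable [Fintype V]

theorem cutSize_eq_card_interedges (S : Finset V) : G.cutSize S = #(G.interedges S Sᶜ) := rfl

theorem cutSize_le_maxCut (S : Finset V) : G.cutSize S ≤ G.maxCut :=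
  le_sup (mem_univ S)

-- Add the missing vertices one at a time, each to the side of the cut where it has fewer
-- neighbours: the better of the two choices gains at least half of its edges back to `X ∪ Y`.
theorem four_mul_card_interedges_add_le {X Y : Finset V} (hXY : Disjoint X Y) :
    4 * #(G.interedges X Y) + #(G.interedges univ univ) ≤
      4 * G.maxCut + #(G.interedges (X ∪ Y) (X ∪ Y)) := by
  induction hk : #(X ∪ Y)ᶜ generalizing X Y with
  | zero =>
    have hY : Y = Xᶜ := by
      rw [card_eq_zero, compl_eq_empty_iff] at hk
      exact (isCompl_iff.2 ⟨hXY.symm, codisjoint_iff.2 (by rw [sup_comm]; exact hk)⟩).eq_compl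
    subst hY
    rw [union_compl, ← cutSize_eq_card_interedges]
    have := cutSize_le_maxCut (G := G) X
    omega
  | succ k ih =>
    obtain ⟨u, hu⟩ : ((X ∪ Y)ᶜ).Nonempty := by rw [← card_pos, hk]; omega
    have huXY : u ∉ X ∪ Y := mem_compl.1 hu
    rw [mem_union, not_or] at huXY
    have hk' : ∀ {X' Y' : Finset V}, X' ∪ Y' = insert u (X ∪ Y) → #(X' ∪ Y')ᶜ = k := by
      intro X' Y' h
      rw [h, compl_insert, card_erase_of_mem hu, hk, Nat.add_sub_cancel]
    have hX := ih (disjoint_insert_left.2 ⟨huXY.2, hXY⟩) (hk' (insert_union u X Y))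
    have hY := ih (disjoint_insert_right.2 ⟨huXY.1, hXY⟩) (hk' (union_insert u X Y))
    rw [insert_union, card_interedges_insert_left huXY.1] at hX
    rw [union_insert, card_interedges_insert_right huXY.2] at hY
    rw [card_interedges_insert_self (mem_compl.1 hu), filter_union,
      card_union_of_disjoint (disjoint_filter_filter hXY)] at hX hY
    omega

theorem card_interedges_univ_le_four_mul_maxCut : #(G.interedges univ univ) ≤ 4 * G.maxCut := by
  simpa using four_mul_card_interedges_add_le (G := G) (disjoint_empty_left (∅ : Finset V))

theorem CliqueFree.not_isNClique_three_of_subset_neighborFinset (hG : G.CliqueFree 4) {v : V}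
    (hs : s ⊆ G.neighborFinset v) : ¬G.IsNClique 3 s :=
  fun h ↦ hG _ (h.insert fun _ hb ↦ (mem_neighborFinset _ _ _).1 (hs hb))

theorem four_mul_sq_card_interedges_neighborFinset_add_le (hG : G.CliqueFree 4) (v : V) :
    4 * #(G.interedges (G.neighborFinset v) (G.neighborFinset v)) ^ 2 +
        G.degree v ^ 2 * #(G.interedges univ univ) ≤
      G.degree v ^ 2 *
        (4 * G.maxCut + #(G.interedges (G.neighborFinset v) (G.neighborFinset v))) := by
  obtain ⟨X, hX, hcut⟩ :=
    exists_sq_card_interedges_le_of_triangleFree_on (W := G.neighborFinset v)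
      fun _ ↦ hG.not_isNClique_three_of_subset_neighborFinset
  rw [card_neighborFinset_eq_degree] at hcut
  have hext := four_mul_card_interedges_add_le (G := G)
    (disjoint_sdiff (s := X) (t := G.neighborFinset v))
  rw [union_sdiff_of_subset hX] at hext
  calc _ ≤ G.degree v ^ 2 *
          (4 * #(G.interedges X (G.neighborFinset v \ X)) + #(G.interedges univ univ)) := by
        linarith
    _ ≤ _ := Nat.mul_le_mul_left _ hext

theorem sum_degree_sq_le :
    ∑ v, G.degree v ^ 2 ≤
      Fintype.card V * G.maxCut +
        ∑ v, #(G.interedges (G.neighborFinset v) (G.neighborFinset v)) := by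
  have hnbhd (v : V) : ∑ u ∈ G.neighborFinset v, G.degree u =
      G.cutSize (G.neighborFinset v) +
        #(G.interedges (G.neighborFinset v) (G.neighborFinset v)) := by
    rw [← card_interedges_univ_right, ← union_compl (G.neighborFinset v),
      card_interedges_union_right _ disjoint_compl_right, cutSize_eq_card_interedges, add_comm]
  have hswap : ∑ v, ∑ u ∈ G.neighborFinset v, G.degree u = ∑ v, G.degree v ^ 2 := by
    simp only [neighborFinset_eq_filter, sum_sum_filter_adj, ← card_neighborFinset_eq_degree,
      smul_eq_mul, sq]
  rw [← hswap, ← card_univ, ← smul_eq_mul, ← sum_const, ← sum_add_distrib]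
  exact sum_le_sum fun v _ ↦ (hnbhd v).trans_le (Nat.add_le_add_right (cutSize_le_maxCut _) _)

theorem twentythree_mul_sum_degree_sq_le (hG : G.CliqueFree 4) :
    23 * ∑ v, (G.degree v : ℝ) ^ 2 ≤
      Fintype.card V * (96 * G.maxCut - 16 * #(G.interedges univ univ)) := by
  have hsum : ∑ v, (G.degree v : ℝ) ^ 2 ≤ Fintype.card V * G.maxCut +
      ∑ v, (#(G.interedges (G.neighborFinset v) (G.neighborFinset v)) : ℝ) := by
    exact_mod_cast sum_degree_sq_le
  have hE : (#(G.interedges univ univ) : ℝ) ≤ 4 * G.maxCut := by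
    exact_mod_cast card_interedges_univ_le_four_mul_maxCut
  have hnbhd (v : V) : 32 * (#(G.interedges (G.neighborFinset v) (G.neighborFinset v)) : ℝ) ≤
      9 * (G.degree v : ℝ) ^ 2 + 16 * (4 * G.maxCut - #(G.interedges univ univ)) := by
    refine thirtytwo_mul_le_of_four_mul_sq_le (by positivity) (by linarith) ?_
    have := four_mul_sq_card_interedges_neighborFinset_add_le hG v
    rw [← Nat.cast_le (α := ℝ)] at this
    push_cast at this
    linarith
  have hnbhd_sum := sum_le_sum fun v (_ : v ∈ univ) ↦ hnbhd v
  rw [← mul_sum, sum_add_distrib, ← mul_sum, sum_const, card_univ, nsmul_eq_mul] at hnbhd_sum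
  linarith

end SimpleGraph

/-- A `K₄`-free graph on `n` vertices with `e ≤ n²/4` edges can be made bipartite by
deleting at most `3n²/28` edges: `e - b(G) ≤ 3n²/28`. -/
theorem K4_free_sparse_max_cut {V : Type*} [Fintype V] [DecidableEq V]
    (G : SimpleGraph V) [DecidableRel G.Adj] (hG : G.CliqueFree 4)
    (he : (G.edgeFinset.card : ℝ) ≤ (Fintype.card V : ℝ) ^ 2 / 4) :
    (G.edgeFinset.card : ℝ) - G.maxCut ≤ 3 * (Fintype.card V : ℝ) ^ 2 / 28 := by
  have hCS :
      ((2 * #G.edgeFinset : ℕ) : ℝ) ^ 2 ≤ Fintype.card V * ∑ v, (G.degree v : ℝ) ^ 2 := by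
    exact_mod_cast G.sq_two_mul_card_edgeFinset_le_card_mul_sum_degree_sq
  have hdeg := G.twentythree_mul_sum_degree_sq_le hG
  rw [SimpleGraph.card_interedges_univ] at hdeg
  push_cast at hCS hdeg
  exact sub_le_three_mul_sq_div_of_bounds (by positivity) (by positivity) he (by linarith)
    (by linarith)
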